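/- Every nilpotent Jordan algebra of dimension at most 3 over any field is associative. -/
import Mathlib


/-- A map `f : M → M → N` is `K`-bilinear. -/
def IsBilin (K : Type*) [Field K] {M N : Type*} [AddCommGroup M] [Module K M]
    [AddCommGroup N] [Module K N] (f : M → M → N) : Prop :=
  (∀ x x' y, f (x + x') y = f x y + f x' y) ∧
  (∀ x y y', f x (y + y') = f x y + f x y') ∧
  (∀ (a : K) (x y), f (a • x) y = a • f x y) ∧
  (∀ (a : K) (x y), f x (a • y) = a • f x y)

/-- `mul` makes `M` into a Jordan algebra over `K`: a commutative bilinear product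
satisfying the Jordan identity `x² ∘ (x ∘ y) = x ∘ (x² ∘ y)`. -/
def IsJordanAlg (K : Type*) [Field K] {M : Type*} [AddCommGroup M] [Module K M]
    (mul : M → M → M) : Prop :=
  IsBilin K mul ∧ (∀ x y, mul x y = mul y x) ∧
  ∀ x y, mul (mul x x) (mul x y) = mul x (mul (mul x x) y)

/-- A Jordan 2-cocycle from `(M, mul)` to `V`. -/
def IsJCocycle (K : Type*) [Field K] {M V : Type*} [AddCommGroup M] [Module K M]
    [AddCommGroup V] [Module K V] (mul : M → M → M) (θ : M → M → V) : Prop :=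
  IsBilin K θ ∧ (∀ x y, θ x y = θ y x) ∧
  ∀ x y, θ (mul x x) (mul x y) = θ x (mul (mul x x) y)

/-- Lower central series: `lcs K mul 0 = c¹(J) = J`, `lcs K mul (n+1) = c^{n+2}(J) = c^{n+1}(J) ∘ J`. -/
def lcs (K : Type*) [Field K] {M : Type*} [AddCommGroup M] [Module K M]
    (mul : M → M → M) : ℕ → Submodule K M
  | 0 => ⊤
  | n + 1 => Submodule.span K {z | ∃ x, x ∈ lcs K mul n ∧ ∃ y, z = mul x y}

/-- A Jordan algebra is nilpotent if its lower central series reaches zero. -/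
def IsNilpotentAlg (K : Type*) [Field K] {M : Type*} [AddCommGroup M] [Module K M]
    (mul : M → M → M) : Prop :=
  ∃ n, lcs K mul n = ⊥

/-- Isomorphism of (Jordan) algebras. -/
def JIso (K : Type*) [Field K] {M N : Type*} [AddCommGroup M] [Module K M]
    [AddCommGroup N] [Module K N] (mul1 : M → M → M) (mul2 : N → N → N) : Prop :=
  ∃ e : M ≃ₗ[K] N, ∀ x y, e (mul1 x y) = mul2 (e x) (e y)

/-- Central extension product on `M × V` induced by `θ`. -/
def extMul (K : Type*) [Field K] {M V : Type*} [AddCommGroup M] [Module K M]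
    [AddCommGroup V] [Module K V] (mul : M → M → M) (θ : M → M → V) :
    M × V → M × V → M × V :=
  fun p q => (mul p.1 q.1, θ p.1 q.1)

section Aux

variable {K : Type*} [Field K] {M : Type*} [AddCommGroup M] [Module K M]
variable (mul : M → M → M)

lemma lcs_zero : lcs K mul 0 = ⊤ := rfl

lemma mem_lcs_zero (x : M) : x ∈ lcs K mul 0 := by rw [lcs_zero]; exact Submodule.mem_top

lemma lcs_succ_eq (n : ℕ) : lcs K mul (n + 1) =
    Submodule.span K {z | ∃ x, x ∈ lcs K mul n ∧ ∃ y, z = mul x y} := rfl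

lemma mem_lcs_succ {x : M} {n : ℕ} (hx : x ∈ lcs K mul n) (y : M) :
    mul x y ∈ lcs K mul (n + 1) :=
  Submodule.subset_span ⟨x, hx, y, rfl⟩

lemma lcs_succ_le (n : ℕ) : lcs K mul (n + 1) ≤ lcs K mul n := by
  induction n with
  | zero => exact le_top
  | succ n ih =>
      rw [lcs_succ_eq, lcs_succ_eq]
      refine Submodule.span_mono ?_
      rintro z ⟨x, hx, y, hy⟩
      exact ⟨x, ih hx, y, hy⟩

lemma lcs_antitone {m n : ℕ} (h : m ≤ n) : lcs K mul n ≤ lcs K mul m := by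
  induction n, h using Nat.le_induction with
  | base => exact le_rfl
  | succ n hmn ih => exact le_trans (lcs_succ_le mul n) ih

lemma lcs_stab {n : ℕ} (h : lcs K mul (n + 1) = lcs K mul n) :
    ∀ m, lcs K mul (n + m) = lcs K mul n := by
  intro m
  induction m with
  | zero => rfl
  | succ m ih =>
      have h2 : n + (m + 1) = (n + m) + 1 := rfl
      rw [h2, lcs_succ_eq, ih, ← lcs_succ_eq, h]

lemma lcs_eq_bot_of_stall (hnil : IsNilpotentAlg K mul) {n : ℕ}
    (h : lcs K mul (n + 1) = lcs K mul n) : lcs K mul n = ⊥ := by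
  obtain ⟨N, hN⟩ := hnil
  rcases le_total N n with hle | hle
  · exact le_bot_iff.mp (hN ▸ lcs_antitone mul hle)
  · have h2 := lcs_stab mul h (N - n)
    rw [Nat.add_sub_cancel' hle, hN] at h2
    exact h2.symm

end Aux

/-- every nilpotent Jordan algebra of dimension at most 3 over any field
is associative. -/
theorem stmt16 (K : Type*) [Field K] {M : Type*} [AddCommGroup M] [Module K M]
    [FiniteDimensional K M] (hdim : Module.finrank K M ≤ 3)
    (mul : M → M → M) (hJ : IsJordanAlg K mul) (hnil : IsNilpotentAlg K mul) :
    ∀ x y z, mul (mul x y) z = mul x (mul y z) := by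
  obtain ⟨⟨haddl, haddr, hsmull, hsmulr⟩, hcomm, hjordan⟩ := hJ
  -- Step 1 : lcs 3 = ⊥
  have h3 : lcs K mul 3 = ⊥ := by
    by_contra h3
    have hstrict : ∀ k, k ≤ 2 → lcs K mul (k + 1) < lcs K mul k := by
      intro k hk
      refine lt_of_le_of_ne (lcs_succ_le mul k) ?_
      intro heq
      have hb := lcs_eq_bot_of_stall mul hnil heq
      have hle : lcs K mul 3 ≤ lcs K mul k := lcs_antitone mul (by omega)
      rw [hb] at hle
      exact h3 (le_bot_iff.mp hle)
    have f0 : Module.finrank K (lcs K mul 0) = Module.finrank K M := finrank_top K M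
    have f1 : Module.finrank K (lcs K mul 1) < Module.finrank K (lcs K mul 0) :=
      Submodule.finrank_lt_finrank_of_lt (hstrict 0 (by omega))
    have f2 : Module.finrank K (lcs K mul 2) < Module.finrank K (lcs K mul 1) :=
      Submodule.finrank_lt_finrank_of_lt (hstrict 1 (by omega))
    have f3 : Module.finrank K (lcs K mul 3) < Module.finrank K (lcs K mul 2) :=
      Submodule.finrank_lt_finrank_of_lt (hstrict 2 (by omega))
    have hz : Module.finrank K (lcs K mul 3) = 0 := by omega
    exact h3 (Submodule.finrank_eq_zero.mp hz)
  have hbot3 : ∀ x ∈ lcs K mul 2, ∀ y, mul x y = 0 := by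
    intro x hx y
    have h := mem_lcs_succ mul hx y
    rw [h3, Submodule.mem_bot] at h
    exact h
  by_cases hC : lcs K mul 2 = ⊥
  · -- easy case: c³ = 0
    intro x y z
    have h1 : mul (mul x y) z = 0 := by
      have h := mem_lcs_succ mul (mem_lcs_succ mul (mem_lcs_zero (K := K) mul x) y) z
      rw [hC, Submodule.mem_bot] at h; exact h
    have h2 : mul (mul y z) x = 0 := by
      have h := mem_lcs_succ mul (mem_lcs_succ mul (mem_lcs_zero (K := K) mul y) z) x
      rw [hC, Submodule.mem_bot] at h; exact h
    rw [h1, hcomm x (mul y z), h2]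
  · -- hard case
    have hst : ∀ k, k ≤ 1 → lcs K mul (k + 1) < lcs K mul k := by
      intro k hk
      refine lt_of_le_of_ne (lcs_succ_le mul k) ?_
      intro heq
      have hb := lcs_eq_bot_of_stall mul hnil heq
      have hle : lcs K mul 2 ≤ lcs K mul k := lcs_antitone mul (by omega)
      rw [hb] at hle
      exact hC (le_bot_iff.mp hle)
    have f0 : Module.finrank K (lcs K mul 0) = Module.finrank K M := finrank_top K M
    have f1 : Module.finrank K (lcs K mul 1) < Module.finrank K (lcs K mul 0) :=
      Submodule.finrank_lt_finrank_of_lt (hst 0 (by omega))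
    have f2 : Module.finrank K (lcs K mul 2) < Module.finrank K (lcs K mul 1) :=
      Submodule.finrank_lt_finrank_of_lt (hst 1 (by omega))
    have fC : Module.finrank K (lcs K mul 2) ≠ 0 := fun h =>
      hC (Submodule.finrank_eq_zero.mp h)
    have hr2 : Module.finrank K (lcs K mul 2) = 1 := by omega
    have hr1 : Module.finrank K (lcs K mul 1) = 2 := by omega
    have hrM : Module.finrank K M = 3 := by omega
    -- sup with a vector outside lcs 1 is everything
    have hsup_top : ∀ e : M, e ∉ lcs K mul 1 →
        lcs K mul 1 ⊔ Submodule.span K {e} = ⊤ := by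
      intro e he
      have hlt : lcs K mul 1 < lcs K mul 1 ⊔ Submodule.span K {e} := by
        refine lt_of_le_of_ne le_sup_left ?_
        intro heq
        exact he (heq ▸ Submodule.mem_sup_right (Submodule.mem_span_singleton_self e))
      have h1 := Submodule.finrank_lt_finrank_of_lt hlt
      have h2 := Submodule.finrank_le (lcs K mul 1 ⊔ Submodule.span K {e})
      exact Submodule.eq_top_of_finrank_eq (by omega)
    -- some square is not in lcs 2
    have hsq : ∃ e : M, mul e e ∉ lcs K mul 2 := by
      by_contra hsq
      push_neg at hsq
      obtain ⟨e1, he1⟩ : ∃ e : M, e ∉ lcs K mul 1 := by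
        by_contra hall
        push_neg at hall
        have htop : lcs K mul 1 = ⊤ := Submodule.eq_top_iff'.mpr hall
        exact (hst 0 (by omega)).ne (by rw [htop, lcs_zero])
      have hprod : ∀ u v : M, mul u v ∈ lcs K mul 2 := by
        intro u v
        have hu : u ∈ lcs K mul 1 ⊔ Submodule.span K {e1} := by
          rw [hsup_top e1 he1]; exact Submodule.mem_top
        have hv : v ∈ lcs K mul 1 ⊔ Submodule.span K {e1} := by
          rw [hsup_top e1 he1]; exact Submodule.mem_top
        obtain ⟨b, hb, s, hs, rfl⟩ := Submodule.mem_sup.mp hu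
        obtain ⟨b', hb', s', hs', rfl⟩ := Submodule.mem_sup.mp hv
        obtain ⟨a, rfl⟩ := Submodule.mem_span_singleton.mp hs
        obtain ⟨a', rfl⟩ := Submodule.mem_span_singleton.mp hs'
        have m3 : mul e1 b' ∈ lcs K mul 2 := by
          rw [hcomm e1 b']; exact mem_lcs_succ mul hb' e1
        simp only [haddl, haddr, hsmull, hsmulr]
        refine Submodule.add_mem _ (Submodule.add_mem _ ?_ ?_)
          (Submodule.add_mem _ ?_ ?_)
        · exact mem_lcs_succ mul hb _
        · exact Submodule.smul_mem _ _ (mem_lcs_succ mul hb _)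
        · exact Submodule.smul_mem _ _ m3
        · exact Submodule.smul_mem _ _ (Submodule.smul_mem _ _ (hsq e1))
      have hle : lcs K mul 1 ≤ lcs K mul 2 := by
        rw [lcs_succ_eq mul 0]
        refine Submodule.span_le.mpr ?_
        rintro z ⟨x, hx, y, rfl⟩
        exact hprod x y
      exact absurd hle (hst 1 (by omega)).not_ge
    obtain ⟨e1, he2C⟩ := hsq
    set e2 : M := mul e1 e1 with he2def
    have he2B : e2 ∈ lcs K mul 1 := mem_lcs_succ mul (mem_lcs_zero (K := K) mul e1) e1
    have he1B : e1 ∉ lcs K mul 1 := fun h => he2C (mem_lcs_succ mul h e1)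
    have htop : lcs K mul 1 ⊔ Submodule.span K {e1} = ⊤ := hsup_top e1 he1B
    -- lcs 1 = lcs 2 ⊔ span e2
    have hB : lcs K mul 2 ⊔ Submodule.span K {e2} = lcs K mul 1 := by
      have hle : lcs K mul 2 ⊔ Submodule.span K {e2} ≤ lcs K mul 1 :=
        sup_le (lcs_succ_le mul 1) ((Submodule.span_singleton_le_iff_mem _ _).mpr he2B)
      have hlt : lcs K mul 2 < lcs K mul 2 ⊔ Submodule.span K {e2} := by
        refine lt_of_le_of_ne le_sup_left ?_
        intro heq
        exact he2C (heq ▸ Submodule.mem_sup_right (Submodule.mem_span_singleton_self e2))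
      have h1 := Submodule.finrank_lt_finrank_of_lt hlt
      exact Submodule.eq_of_le_of_finrank_le hle (by omega)
    set e3 : M := mul e2 e1 with he3def
    have he3C : e3 ∈ lcs K mul 2 := mem_lcs_succ mul he2B e1
    have he1e1 : mul e1 e1 = e2 := he2def.symm
    have he2e1 : mul e2 e1 = e3 := he3def.symm
    have he1e2 : mul e1 e2 = e3 := (hcomm e1 e2).trans he2e1
    have he3e1 : mul e3 e1 = 0 := hbot3 e3 he3C e1
    have he3e2 : mul e3 e2 = 0 := hbot3 e3 he3C e2
    have he3e3 : mul e3 e3 = 0 := hbot3 e3 he3C e3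
    have he1e3 : mul e1 e3 = 0 := (hcomm e1 e3).trans he3e1
    have he2e3 : mul e2 e3 = 0 := (hcomm e2 e3).trans he3e2
    have he2e2 : mul e2 e2 = 0 := by
      have hj := hjordan e1 e1
      rw [← he2def, ← he3def] at hj
      rw [hj, he1e3]
    -- decomposition
    have hdec : ∀ x : M, ∃ a b : K, ∃ c : M, c ∈ lcs K mul 2 ∧
        x = a • e1 + b • e2 + c := by
      intro x
      have hx : x ∈ lcs K mul 1 ⊔ Submodule.span K {e1} := by
        rw [htop]; exact Submodule.mem_top
      obtain ⟨p, hp, s, hs, hx⟩ := Submodule.mem_sup.mp hx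
      obtain ⟨a, rfl⟩ := Submodule.mem_span_singleton.mp hs
      rw [← hB] at hp
      obtain ⟨c, hc, t, ht, hp⟩ := Submodule.mem_sup.mp hp
      obtain ⟨b, rfl⟩ := Submodule.mem_span_singleton.mp ht
      exact ⟨a, b, c, hc, by rw [← hx, ← hp]; abel⟩
    -- product formula
    have hmul : ∀ (a b : K) (c : M), c ∈ lcs K mul 2 → ∀ (a' b' : K) (c' : M),
        c' ∈ lcs K mul 2 →
        mul (a • e1 + b • e2 + c) (a' • e1 + b' • e2 + c') =
          (a * a') • e2 + (a * b' + a' * b) • e3 := by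
      intro a b c hc a' b' c' hc'
      have hcz : ∀ y, mul c y = 0 := fun y => hbot3 c hc y
      have hcz' : ∀ y, mul y c = 0 := fun y => (hcomm y c).trans (hcz y)
      have hc'z : ∀ y, mul c' y = 0 := fun y => hbot3 c' hc' y
      have hc'z' : ∀ y, mul y c' = 0 := fun y => (hcomm y c').trans (hc'z y)
      simp only [haddl, haddr, hsmull, hsmulr, he1e1, he1e2, he1e3, he2e1,
        he2e2, he2e3, he3e1, he3e2, he3e3, hcz, hcz', hc'z, hc'z',
        smul_zero, add_zero, zero_add]
      module
    -- finish
    intro x y z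
    obtain ⟨a, b, c, hc, rfl⟩ := hdec x
    obtain ⟨a', b', c', hc', rfl⟩ := hdec y
    obtain ⟨a'', b'', c'', hc'', rfl⟩ := hdec z
    rw [hmul a b c hc a' b' c' hc', hmul a' b' c' hc' a'' b'' c'' hc'']
    have hform1 : (a * a') • e2 + (a * b' + a' * b) • e3 =
        (0 : K) • e1 + (a * a') • e2 + ((a * b' + a' * b) • e3) := by module
    have hform2 : (a' * a'') • e2 + (a' * b'' + a'' * b') • e3 =
        (0 : K) • e1 + (a' * a'') • e2 + ((a' * b'' + a'' * b') • e3) := by module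
    rw [hform1, hform2]
    rw [hmul 0 (a * a') _ (Submodule.smul_mem _ _ he3C) a'' b'' c'' hc'',
        hmul a b c hc 0 (a' * a'') _ (Submodule.smul_mem _ _ he3C)]
    module
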